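/- Let Δ = (1/4)(x + x^{-1} + y + y^{-1}) be the Laplace operator on the discrete Heisenberg group H and Δ_N the analogous operator on the finite Heisenberg group H_N over Z/NZ. If N = n^2 + 1, then for all k ≤ n one has (Δ^k δ_e, δ_e) = (Δ_N^k δ_e, δ_e), where δ_e is the indicator function of the identity element and the inner products are taken in ℓ^2(H) and ℓ^2(H_N) respectively. -/

import Mathlib

@[ext]
structure Heis (R : Type*) [CommRing R] where
  a : R
  b : R
  c : R

namespace Heis
variable {R : Type*} [CommRing R]

instance : One (Heis R) := ⟨⟨0, 0, 0⟩⟩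
instance : Mul (Heis R) := ⟨fun p q => ⟨p.a + q.a, p.b + q.b, p.c + q.c + p.a * q.b⟩⟩
instance : Inv (Heis R) := ⟨fun p => ⟨-p.a, -p.b, -p.c + p.a * p.b⟩⟩

theorem mul_def (p q : Heis R) :
    p * q = ⟨p.a + q.a, p.b + q.b, p.c + q.c + p.a * q.b⟩ := rfl
theorem one_def : (1 : Heis R) = ⟨0, 0, 0⟩ := rfl
theorem inv_def (p : Heis R) : p⁻¹ = ⟨-p.a, -p.b, -p.c + p.a * p.b⟩ := rfl

instance : Group (Heis R) where
  mul_assoc p q r := by ext <;> simp [mul_def] <;> ring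
  one_mul p := by ext <;> simp [mul_def, one_def]
  mul_one p := by ext <;> simp [mul_def, one_def]
  inv_mul_cancel p := by ext <;> simp [mul_def, one_def, inv_def]

/-- generator x -/
def xgen : Heis R := ⟨1, 0, 0⟩
/-- generator y -/
def ygen : Heis R := ⟨0, 1, 0⟩

end Heis

/-- The Laplace operator Δ = (1/4)(x + x⁻¹ + y + y⁻¹) as an element of the group
algebra of the Heisenberg group over a commutative ring R. -/
noncomputable def heisLaplacian (R : Type*) [CommRing R] :
    MonoidAlgebra ℝ (Heis R) :=
  MonoidAlgebra.single Heis.xgen (1 / 4 : ℝ) + MonoidAlgebra.single Heis.xgen⁻¹ (1 / 4 : ℝ)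
    + MonoidAlgebra.single Heis.ygen (1 / 4 : ℝ) + MonoidAlgebra.single Heis.ygen⁻¹ (1 / 4 : ℝ)

/-!
Reduction modulo `N` is a group homomorphism `H → H_N` that carries `Δ` to `Δ_N`, so the
coefficient of `e` in `Δ_N ^ k` is the sum of the coefficients of `Δ ^ k` over the kernel.
A product of `k` generators `x^{±1}, y^{±1}` has `|a|, |b| ≤ k` and `|c| ≤ k ^ 2`, and when
`k ^ 2 < N` the identity is the only such element of the kernel.
-/

open scoped Pointwise

theorem Finsupp.mapDomain_apply_of_support_fiber_subset {α β M : Type*} [AddCommMonoid M]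
    {f : α → β} (x : α →₀ M) {a : α} (h : ∀ a' ∈ x.support, f a' = f a → a' = a) :
    x.mapDomain f (f a) = x a := by
  classical
  rw [Finsupp.mapDomain, Finsupp.sum_apply, ← x.sum_ite_self_eq' a]
  refine Finset.sum_congr rfl fun a' ha' => ?_
  dsimp only
  rw [Finsupp.single_apply]
  by_cases ha'a : a' = a
  · simp [ha'a]
  · rw [if_neg ha'a, if_neg (mt (h a' ha') ha'a)]

theorem MonoidAlgebra.support_coeff_pow_subset {k G : Type*} [Semiring k] [Monoid G]
    [DecidableEq G] (x : MonoidAlgebra k G) (n : ℕ) :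
    (x ^ n).coeff.support ⊆ x.coeff.support ^ n := by
  induction n with
  | zero => simpa using MonoidAlgebra.support_coeff_one_subset
  | succ n ih =>
    rw [pow_succ, pow_succ]
    exact (MonoidAlgebra.support_coeff_mul_subset _ _).trans (Finset.mul_subset_mul_right ih)

namespace Heis

variable {R S : Type*} [CommRing R] [CommRing S]

def map (f : R →+* S) : Heis R →* Heis S where
  toFun g := ⟨f g.a, f g.b, f g.c⟩
  map_one' := by ext <;> simp [one_def]
  map_mul' p q := by ext <;> simp [mul_def]

@[simp]
theorem map_xgen (f : R →+* S) : map f xgen = xgen := by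
  ext <;> simp [map, xgen]

@[simp]
theorem map_ygen (f : R →+* S) : map f ygen = ygen := by
  ext <;> simp [map, ygen]

def box (k : ℕ) : Set (Heis ℤ) := {g | |g.a| ≤ k ∧ |g.b| ≤ k ∧ |g.c| ≤ k ^ 2}

theorem one_mem_box : (1 : Heis ℤ) ∈ box 0 := by
  simp [box, one_def]

theorem mul_mem_box {g h : Heis ℤ} {k m : ℕ} (hg : g ∈ box k) (hh : h ∈ box m) :
    g * h ∈ box (k + m) := by
  obtain ⟨hga, hgb, hgc⟩ := hg
  obtain ⟨hha, hhb, hhc⟩ := hh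
  have hab : |g.a * h.b| ≤ k * m := by
    rw [abs_mul]; exact mul_le_mul hga hhb (abs_nonneg _) (by positivity)
  refine ⟨?_, ?_, ?_⟩ <;> simp only [mul_def] <;> push_cast
  · exact (abs_add_le _ _).trans (add_le_add hga hha)
  · exact (abs_add_le _ _).trans (add_le_add hgb hhb)
  · calc |g.c + h.c + g.a * h.b| ≤ |g.c| + |h.c| + |g.a * h.b| := abs_add_three _ _ _
      _ ≤ (k : ℤ) ^ 2 + m ^ 2 + k * m := by gcongr
      _ ≤ (k + m) ^ 2 := by nlinarith [Int.natCast_nonneg k, Int.natCast_nonneg m]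

theorem pow_subset_box {T : Finset (Heis ℤ)} [DecidableEq (Heis ℤ)] (hT : ↑T ⊆ box 1)
    (k : ℕ) : ↑(T ^ k) ⊆ box k := by
  induction k with
  | zero => simpa using one_mem_box
  | succ k ih =>
    rw [pow_succ]
    rintro _ hgt
    obtain ⟨g, hg, t, ht, rfl⟩ := Finset.mem_mul.mp hgt
    exact mul_mem_box (ih hg) (hT ht)

theorem eq_one_of_mem_box_of_map_eq_one {N k : ℕ} (hkN : k ^ 2 < N) {g : Heis ℤ}
    (hg : g ∈ box k) (h : map (Int.castRingHom (ZMod N)) g = 1) : g = 1 := by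
  have hkN' : k < N := (Nat.le_self_pow two_ne_zero k).trans_lt hkN
  have eq_zero {z : ℤ} {m : ℕ} (hz : |z| ≤ m) (hmN : m < N) (hzN : (z : ZMod N) = 0) : z = 0 :=
    Int.eq_zero_of_abs_lt_dvd ((ZMod.intCast_zmod_eq_zero_iff_dvd z N).mp hzN)
      (hz.trans_lt (by exact_mod_cast hmN))
  obtain ⟨ha, hb, hc⟩ := hg
  ext
  · exact eq_zero ha hkN' (congrArg Heis.a h)
  · exact eq_zero hb hkN' (congrArg Heis.b h)
  · exact eq_zero (m := k ^ 2) (by exact_mod_cast hc) hkN (congrArg Heis.c h)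

end Heis

open Heis

theorem heisLaplacian_map {R S : Type*} [CommRing R] [CommRing S] (f : R →+* S) :
    MonoidAlgebra.mapDomainRingHom ℝ (Heis.map f) (heisLaplacian R) = heisLaplacian S := by
  simp [heisLaplacian, MonoidAlgebra.mapDomain_add]

theorem support_heisLaplacian_subset {R : Type*} [CommRing R] [DecidableEq (Heis R)] :
    (heisLaplacian R).coeff.support ⊆ {xgen, xgen⁻¹, ygen, ygen⁻¹} := by
  intro g hg
  contrapose! hg
  simp only [Finset.mem_insert, Finset.mem_singleton, not_or] at hg
  simp [heisLaplacian, Ne.symm hg.1, Ne.symm hg.2.1, Ne.symm hg.2.2.1, Ne.symm hg.2.2.2]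

theorem support_heisLaplacian_pow_subset_box (k : ℕ) :
    ↑(heisLaplacian ℤ ^ k).coeff.support ⊆ box k := by
  classical
  refine (Finset.coe_subset.mpr ((heisLaplacian ℤ).support_coeff_pow_subset k)).trans
    (pow_subset_box ?_ k)
  refine (Finset.coe_subset.mpr support_heisLaplacian_subset).trans ?_
  simp [Set.insert_subset_iff, box, xgen, ygen, inv_def]

theorem heisenberg_moment_matching (n k N : ℕ) (hk : k ≤ n) (hN : N = n ^ 2 + 1) :
    (heisLaplacian ℤ ^ k).coeff (1 : Heis ℤ) = (heisLaplacian (ZMod N) ^ k).coeff (1 : Heis (ZMod N)) := by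
  have hkN : k ^ 2 < N := hN ▸ Nat.lt_succ_of_le (Nat.pow_le_pow_left hk 2)
  let φ := Heis.map (Int.castRingHom (ZMod N))
  rw [← heisLaplacian_map (Int.castRingHom (ZMod N)), ← map_pow, ← map_one φ]
  refine (Finsupp.mapDomain_apply_of_support_fiber_subset _ fun g hg hg1 => ?_).symm
  exact eq_one_of_mem_box_of_map_eq_one hkN (support_heisLaplacian_pow_subset_box k hg)
    (hg1.trans (map_one φ))
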